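/- The Hartley transform commutes with the supercharge operator Q: for every Schwartz function f : ℝ → ℝ and every λ ∈ ℝ, (𝓗(Qf))(λ) = (Q(𝓗f))(λ). -/

import Mathlib

/-- The cas function, `cas x = cos x - sin x`. -/
noncomputable def cas (x : ℝ) : ℝ := Real.cos x - Real.sin x

/-- The Hartley transform `(𝓗 f)(λ) = (1/√(2π)) ∫ f(x) cas(λ x) dx`. -/
noncomputable def hartley (f : ℝ → ℝ) (l : ℝ) : ℝ :=
    (1 / Real.sqrt (2 * Real.pi)) * ∫ x : ℝ, f x * cas (l * x)

/-- The supercharge operator `(Q f)(x) = (1/√2)(-f'(-x) + x f(x))`. -/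
noncomputable def supercharge (f : ℝ → ℝ) (x : ℝ) : ℝ :=
    (1 / Real.sqrt 2) * (-(deriv f (-x)) + x * f x)

/-
The Hartley transform turns differentiation into multiplication by the variable and vice versa,
up to a reflection, because `cas' x = -cas (-x)`: integration by parts gives
`𝓗 (f') λ = λ 𝓗 f (-λ)`, and differentiating under the integral gives `(𝓗 f)' λ = -𝓗 (x f) (-λ)`.
Together with `𝓗 (f ∘ neg) λ = 𝓗 f (-λ)`, the two summands of `Q` are exchanged:
`-f'(-x)` is carried to `λ 𝓗 f (λ)` and `x f(x)` to `-(𝓗 f)'(-λ)`.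
-/

open MeasureTheory

lemma continuous_cas : Continuous cas :=
  Real.continuous_cos.sub Real.continuous_sin

lemma abs_cas_le (x : ℝ) : |cas x| ≤ 2 := by
  rw [abs_le, cas]
  constructor <;> linarith [Real.neg_one_le_cos x, Real.cos_le_one x,
    Real.neg_one_le_sin x, Real.sin_le_one x]

lemma hasDerivAt_cas (x : ℝ) : HasDerivAt cas (-cas (-x)) x :=
  ((Real.hasDerivAt_cos x).sub (Real.hasDerivAt_sin x)).congr_deriv
    (by simp only [cas, Real.cos_neg, Real.sin_neg]; ring)

lemma HasDerivAt.cas {f : ℝ → ℝ} {f' x : ℝ} (hf : HasDerivAt f f' x) :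
    HasDerivAt (fun y => cas (f y)) (-cas (-f x) * f') x :=
  (hasDerivAt_cas (f x)).comp x hf

lemma MeasureTheory.Integrable.mul_cas {f : ℝ → ℝ} (hf : Integrable f) (l : ℝ) :
    Integrable fun x => f x * cas (l * x) :=
  hf.mul_bdd (continuous_cas.comp (continuous_const_mul l)).aestronglyMeasurable
    (Filter.Eventually.of_forall fun x => abs_cas_le (l * x))

lemma hartley_add {f g : ℝ → ℝ} (hf : Integrable f) (hg : Integrable g) (l : ℝ) :
    hartley (fun x => f x + g x) l = hartley f l + hartley g l := by
  simp only [hartley, add_mul, integral_add (hf.mul_cas l) (hg.mul_cas l), mul_add]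

lemma hartley_const_mul (c : ℝ) (f : ℝ → ℝ) (l : ℝ) :
    hartley (fun x => c * f x) l = c * hartley f l := by
  simp only [hartley, mul_assoc, integral_const_mul]
  ring

lemma hartley_neg (f : ℝ → ℝ) (l : ℝ) : hartley (fun x => -f x) l = -hartley f l := by
  simpa using hartley_const_mul (-1) f l

lemma hartley_comp_neg (f : ℝ → ℝ) (l : ℝ) : hartley (fun x => f (-x)) l = hartley f (-l) := by
  simp only [hartley]
  rw [← integral_neg_eq_self]
  simp only [neg_neg, mul_neg, neg_mul]

lemma hartley_deriv {f : ℝ → ℝ} (hd : Differentiable ℝ f) (hf : Integrable f)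
    (hf' : Integrable (deriv f)) (l : ℝ) :
    hartley (deriv f) l = l * hartley f (-l) := by
  have hibp : ∫ x, f x * (-cas (-(l * x)) * l) = -∫ x, deriv f x * cas (l * x) :=
    integral_mul_deriv_eq_deriv_mul_of_integrable (fun x _ => (hd x).hasDerivAt)
      (fun x _ => (hasDerivAt_const_mul l).cas) (by simpa [Pi.mul_def, mul_assoc] using
        ((hf.mul_cas (-l)).mul_const l).neg) (hf'.mul_cas l) (hf.mul_cas l)
  have h : ∫ x, deriv f x * cas (l * x) = l * ∫ x, f x * cas (-l * x) := by
    rw [← neg_neg (∫ x, deriv f x * cas (l * x)), ← hibp, ← integral_const_mul, ← integral_neg]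
    congr 1 with x
    simp only [neg_mul]
    ring
  simp only [hartley, h]
  ring

lemma hasDerivAt_hartley {f : ℝ → ℝ} (hf : Integrable f) (hxf : Integrable fun x => x * f x)
    (l : ℝ) : HasDerivAt (hartley f) (-hartley (fun x => x * f x) (-l)) l := by
  have hderiv (x s : ℝ) : HasDerivAt (fun s => f x * cas (s * x)) (-(x * f x * cas (-s * x))) s :=
    ((hasDerivAt_mul_const x).cas.const_mul (f x)).congr_deriv (by simp only [neg_mul]; ring)
  have hbound (x s : ℝ) : ‖-(x * f x * cas (-s * x))‖ ≤ 2 * ‖x * f x‖ := by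
    rw [norm_neg, norm_mul, mul_comm]
    exact mul_le_mul_of_nonneg_right (abs_cas_le _) (norm_nonneg _)
  have h := hasDerivAt_integral_of_dominated_loc_of_deriv_le (x₀ := l) Filter.univ_mem
    (Filter.Eventually.of_forall fun s => (hf.mul_cas s).aestronglyMeasurable) (hf.mul_cas l)
    (hxf.mul_cas (-l)).neg.aestronglyMeasurable
    (Filter.Eventually.of_forall fun x s _ => hbound x s) (hxf.norm.const_mul 2)
    (Filter.Eventually.of_forall fun x s _ => hderiv x s)
  have hC := h.2.const_mul (1 / Real.sqrt (2 * Real.pi))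
  rw [integral_neg, mul_neg] at hC
  exact hC

lemma SchwartzMap.integrable_deriv (f : SchwartzMap ℝ ℝ) : Integrable (deriv f) :=
  (SchwartzMap.derivCLM ℝ ℝ f).integrable

lemma SchwartzMap.integrable_id_mul (f : SchwartzMap ℝ ℝ) : Integrable fun x => x * f x := by
  refine (integrable_norm_iff (by fun_prop)).mp ?_
  simpa [abs_mul] using f.integrable_pow_mul volume 1

/-- The Hartley transform commutes with the supercharge operator:
`𝓗(Q f) = Q(𝓗 f)` for every Schwartz function `f`. -/
theorem hartley_comm_supercharge (f : SchwartzMap ℝ ℝ) (l : ℝ) :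
    hartley (supercharge (fun x => f x)) l = supercharge (hartley (fun x => f x)) l := by
  have hf' := f.integrable_deriv
  have hxf := f.integrable_id_mul
  calc hartley (supercharge f) l
      = 1 / Real.sqrt 2 * (l * hartley f l + hartley (fun x => x * f x) l) := by
        unfold supercharge
        rw [hartley_const_mul, hartley_add (f := fun x => -deriv f (-x)) hf'.comp_neg.neg hxf,
          hartley_neg, hartley_comp_neg, hartley_deriv f.differentiable f.integrable hf', neg_neg]
        ring
    _ = supercharge (hartley f) l := by
        rw [supercharge, (hasDerivAt_hartley f.integrable hxf (-l)).deriv, neg_neg, neg_neg]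
        ring
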